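/- arXiv:1602.00066 — 8 statements merged into one kernel-verified Lean document; each statement's English description precedes it below -/
import Mathlib

section
/- If n ≡ 1 or 2 (mod 4), then no Skolem sequence of order n exists. -/
/-- A Skolem sequence of order `n`: a permutation of the multiset
`{1,1,2,2,...,n,n}` (indexed by `0 ≤ i < 2n`) satisfying the Skolem property. -/
def IsSkolem (n : ℕ) (ζ : ℕ → ℕ) : Prop :=
  (↑((List.range (2 * n)).map ζ) : Multiset ℕ) =
      (Finset.Icc 1 n).val + (Finset.Icc 1 n).val ∧
  ∀ i j, i < j → j < 2 * n → ζ i = ζ j → j - i = ζ i + 1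

/-- An extended Skolem sequence of order `n`: a permutation of the multiset
`{0,0,1,1,...,n,n}` (indexed by `0 ≤ i < 2(n+1)`) satisfying the Skolem property. -/
def IsESS (n : ℕ) (ζ : ℕ → ℕ) : Prop :=
  (↑((List.range (2 * (n + 1))).map ζ) : Multiset ℕ) =
      (Finset.Icc 0 n).val + (Finset.Icc 0 n).val ∧
  ∀ i j, i < j → j < 2 * (n + 1) → ζ i = ζ j → j - i = ζ i + 1

/-- Cyclic shift of a length-`L` sequence by an integer amount `a`. -/
def shiftZ (u : ℕ → ℕ) (L : ℕ) (a : ℤ) : ℕ → ℕ :=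
  fun t => u ((((t : ℤ) + a) % (L : ℤ)).toNat)

/-- The set of delivery channels between two length-`L` sequences. -/
def deliveryChannels (L : ℕ) (v w : ℕ → ℕ) : Set ℕ :=
  {h | ∃ t < L, v t = h ∧ w t = h}

/-- The set of delivery slots between two length-`L` sequences. -/
def deliverySlots (L : ℕ) (v w : ℕ → ℕ) : Finset ℕ :=
  (Finset.range L).filter (fun t => v t = w t)

/-- If n ≡ 1 or 2 (mod 4), then no Skolem sequence of order n exists. -/
theorem skolem_not_exists (n : ℕ) (h : n % 4 = 1 ∨ n % 4 = 2) :
    ¬ ∃ ζ : ℕ → ℕ, IsSkolem n ζ := by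
  rintro ⟨ζ, hperm, hsk⟩
  set S := Finset.range (2 * n) with hS
  -- every value is in Icc 1 n
  have hmem : ∀ i ∈ S, ζ i ∈ Finset.Icc 1 n := by
    intro i hi
    have h1 : ζ i ∈ ((↑((List.range (2 * n)).map ζ)) : Multiset ℕ) := by
      simp only [Multiset.mem_coe, List.mem_map]
      exact ⟨i, by simpa [hS] using hi, rfl⟩
    rw [hperm] at h1
    rcases Multiset.mem_add.1 h1 with h' | h' <;> exact h'
  -- each fiber has exactly two elements
  have hcard : ∀ k ∈ Finset.Icc 1 n,
      (S.filter (fun i => ζ i = k)).card = 2 := by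
    intro k hk
    have hc2 : Multiset.count k ((↑((List.range (2 * n)).map ζ)) : Multiset ℕ) = 2 := by
      rw [hperm, Multiset.count_add,
        Multiset.count_eq_one_of_mem (Finset.Icc 1 n).nodup (by simpa using hk)]
    have hc3 : Multiset.count k (Multiset.map ζ (S.val)) = 2 := by
      rw [hS, Finset.range_val]
      exact hc2
    rw [Multiset.count_map] at hc3
    rw [Finset.card_def, Finset.filter_val,
      Multiset.filter_congr (fun a _ => (eq_comm : ζ a = k ↔ k = ζ a))]
    exact hc3
  -- fiber sums have parity k+1
  have key : ∀ k ∈ Finset.Icc 1 n,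
      (∑ i ∈ S.filter (fun i => ζ i = k), i) % 2 = (k + 1) % 2 := by
    intro k hk
    obtain ⟨a, b, hab, hset⟩ := Finset.card_eq_two.1 (hcard k hk)
    have main : ∀ a b : ℕ, a < b → S.filter (fun i => ζ i = k) = {a, b} →
        (∑ i ∈ S.filter (fun i => ζ i = k), i) % 2 = (k + 1) % 2 := by
      intro a b hlt hset
      have ha : a ∈ S.filter (fun i => ζ i = k) := by rw [hset]; simp
      have hb : b ∈ S.filter (fun i => ζ i = k) := by rw [hset]; simp
      rw [Finset.mem_filter] at ha hb
      have hbS : b < 2 * n := by simpa [hS] using hb.1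
      have hd : b - a = ζ a + 1 := hsk a b hlt hbS (ha.2.trans hb.2.symm)
      rw [ha.2] at hd
      rw [hset, Finset.sum_pair hlt.ne]
      omega
    rcases lt_or_gt_of_ne hab with hlt | hlt
    · exact main a b hlt hset
    · exact main b a hlt (by rw [hset, Finset.pair_comm])
  -- global parity equation
  have hfib := Finset.sum_fiberwise_of_maps_to hmem (fun i => i)
  have Hpar : (∑ i ∈ S, i) % 2 = (∑ k ∈ Finset.Icc 1 n, (k + 1)) % 2 := by
    rw [← hfib, Finset.sum_nat_mod, Finset.sum_congr rfl key, ← Finset.sum_nat_mod]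
  -- evaluate both sums
  have hG1 : (∑ i ∈ S, i) * 2 = (2 * n) * (2 * n - 1) := by
    rw [hS]; exact Finset.sum_range_id_mul_two (2 * n)
  have hins : Finset.range (n + 1) = insert 0 (Finset.Icc 1 n) := by
    ext x; simp; omega
  have h0 : (0 : ℕ) ∉ Finset.Icc 1 n := by simp
  have hG2 : (∑ k ∈ Finset.range (n + 1), (k + 1)) = 1 + ∑ k ∈ Finset.Icc 1 n, (k + 1) := by
    rw [hins, Finset.sum_insert h0]
  have hG3 : (∑ k ∈ Finset.range (n + 1), (k + 1)) * 2 = (n + 1) * n + 2 * (n + 1) := by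
    rw [Finset.sum_add_distrib, Nat.add_mul, Finset.sum_range_id_mul_two (n + 1)]
    simp [Nat.mul_comm]
  -- arithmetic contradiction
  set X := ∑ i ∈ S, i
  set T := ∑ k ∈ Finset.Icc 1 n, (k + 1)
  rcases h with h | h
  · obtain ⟨m, rfl⟩ : ∃ m, n = 4 * m + 1 := ⟨n / 4, by omega⟩
    have e1 : X * 2 = 64 * (m * m) + 24 * m + 2 := by
      rw [hG1]; have : 2 * (4 * m + 1) - 1 = 8 * m + 1 := by omega
      rw [this]; ring
    have e2 : (1 + T) * 2 = 16 * (m * m) + 20 * m + 6 := by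
      rw [← hG2, hG3]; ring
    omega
  · obtain ⟨m, rfl⟩ : ∃ m, n = 4 * m + 2 := ⟨n / 4, by omega⟩
    have e1 : X * 2 = 64 * (m * m) + 56 * m + 12 := by
      rw [hG1]; have : 2 * (4 * m + 2) - 1 = 8 * m + 3 := by omega
      rw [this]; ring
    have e2 : (1 + T) * 2 = 16 * (m * m) + 28 * m + 12 := by
      rw [← hG2, hG3]; ring
    omega
end

section
/- If n ≡ 0 or 3 (mod 4), then a Skolem sequence of order n exists. -/
/-- First position of value `k` in our Langford-style sequence of order `n`. -/
def skA (n k : ℕ) : ℕ :=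
  if n % 4 = 0 then
    if n < 16 then
      if n = 4 then [1,4,2,0].getD (k-1) 0
      else if n = 8 then [13,3,1,7,8,4,2,0].getD (k-1) 0
      else if n = 12 then [19,20,18,7,5,3,1,8,6,4,2,0].getD (k-1) 0
      else 0
    else
      if k % 2 = 0 then
        if 2*(n/4)-2 ≤ k then (4*(n/4)-k)/2
        else 5*(n/4)+3+(2*(n/4)-4-k)/2
      else
        if 4*(n/4)-5 ≤ k then (n/4)+2+(4*(n/4)-1-k)/2
        else if 2*(n/4)+1 ≤ k then 4*(n/4)+3+(4*(n/4)-7-k)/2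
        else if k = 2*(n/4)-1 then 2*(n/4)+2
        else if 2*(n/4)-5 ≤ k then 6*(n/4)+1+(2*(n/4)-3-k)/2
        else (n/4)+5+(2*(n/4)-7-k)/2
  else
    if n < 19 then
      if n = 3 then [1,2,0].getD (k-1) 0
      else if n = 7 then [11,3,1,7,4,2,0].getD (k-1) 0
      else if n = 11 then [19,3,5,15,11,1,10,7,4,2,0].getD (k-1) 0
      else if n = 15 then [0,1,3,5,18,19,15,16,11,6,8,9,14,12,13].getD (k-1) 0
      else 0
    else
      if k % 2 = 1 then
        if 2*(n/4)-3 ≤ k then (4*(n/4)+3-k)/2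
        else if k = 2*(n/4)-5 then 6*(n/4)+7
        else (n/4)+6+(2*(n/4)-7-k)/2
      else
        if k = 4*(n/4)+2 then 2*(n/4)+3
        else if 4*(n/4)-2 ≤ k then (n/4)+4+(4*(n/4)-k)/2
        else if 2*(n/4)+2 ≤ k then 4*(n/4)+5+(4*(n/4)-4-k)/2
        else if 2*(n/4)-2 ≤ k then 6*(n/4)+4+(2*(n/4)-k)/2
        else if 4 ≤ k then 5*(n/4)+7+(2*(n/4)-4-k)/2
        else 5*(n/4)+3


def SkSpec0 (n k a : ℕ) : Prop := (
    (k % 2 = 0 ∧ 2*(n/4)-2 ≤ k ∧ k ≤ 4*(n/4) ∧ 2*a + k = 4*(n/4)) ∨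
    (k % 2 = 0 ∧ 2 ≤ k ∧ k ≤ 2*(n/4)-4 ∧ 2*a + k = 12*(n/4)+2) ∨
    (k % 2 = 1 ∧ 4*(n/4)-5 ≤ k ∧ k ≤ 4*(n/4)-1 ∧ 2*a + k = 6*(n/4)+3) ∨
    (k % 2 = 1 ∧ 2*(n/4)+1 ≤ k ∧ k ≤ 4*(n/4)-7 ∧ 2*a + k = 12*(n/4)-1) ∨
    (k = 2*(n/4)-1 ∧ a = 2*(n/4)+2) ∨
    (k % 2 = 1 ∧ 2*(n/4)-5 ≤ k ∧ k ≤ 2*(n/4)-3 ∧ 2*a + k = 14*(n/4)-1) ∨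
    (k % 2 = 1 ∧ 1 ≤ k ∧ k ≤ 2*(n/4)-7 ∧ 2*a + k = 4*(n/4)+3))

def SkSpec3 (n k a : ℕ) : Prop := (
    (k % 2 = 1 ∧ 2*(n/4)-3 ≤ k ∧ k ≤ 4*(n/4)+3 ∧ 2*a + k = 4*(n/4)+3) ∨
    (k = 2*(n/4)-5 ∧ a = 6*(n/4)+7) ∨
    (k % 2 = 1 ∧ 1 ≤ k ∧ k ≤ 2*(n/4)-7 ∧ 2*a + k = 4*(n/4)+5) ∨
    (k = 4*(n/4)+2 ∧ a = 2*(n/4)+3) ∨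
    (k % 2 = 0 ∧ 4*(n/4)-2 ≤ k ∧ k ≤ 4*(n/4) ∧ 2*a + k = 6*(n/4)+8) ∨
    (k % 2 = 0 ∧ 2*(n/4)+2 ≤ k ∧ k ≤ 4*(n/4)-4 ∧ 2*a + k = 12*(n/4)+6) ∨
    (k % 2 = 0 ∧ 2*(n/4)-2 ≤ k ∧ k ≤ 2*(n/4) ∧ 2*a + k = 14*(n/4)+8) ∨
    (k % 2 = 0 ∧ 4 ≤ k ∧ k ≤ 2*(n/4)-4 ∧ 2*a + k = 12*(n/4)+10) ∨
    (k = 2 ∧ a = 5*(n/4)+3))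

set_option maxHeartbeats 1000000 in
lemma skA_spec0 {n k : ℕ} (hmod : n % 4 = 0) (h16 : 16 ≤ n)
    (hk1 : 1 ≤ k) (hk2 : k ≤ n) : SkSpec0 n k (skA n k) := by
  obtain ⟨m, rfl⟩ : ∃ m, n = 4 * m := ⟨n/4, by omega⟩
  unfold skA SkSpec0
  rw [if_pos hmod, if_neg (by omega)]
  simp only [Nat.mul_div_cancel_left _ (by norm_num : (0:ℕ) < 4)]
  split_ifs with he h2 h3 h4 h5 h6
  · exact Or.inl ⟨he, h2, by omega, by omega⟩
  · exact Or.inr <| Or.inl ⟨he, by omega, by omega, by omega⟩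
  · exact Or.inr <| Or.inr <| Or.inl ⟨by omega, h3, by omega, by omega⟩
  · exact Or.inr <| Or.inr <| Or.inr <| Or.inl ⟨by omega, h4, by omega, by omega⟩
  · exact Or.inr <| Or.inr <| Or.inr <| Or.inr <| Or.inl ⟨h5, by omega⟩
  · exact Or.inr <| Or.inr <| Or.inr <| Or.inr <| Or.inr <| Or.inl ⟨by omega, h6, by omega, by omega⟩
  · exact Or.inr <| Or.inr <| Or.inr <| Or.inr <| Or.inr <| Or.inr ⟨by omega, by omega, by omega, by omega⟩

set_option maxHeartbeats 1000000 in
lemma skA_spec3 {n k : ℕ} (hmod : n % 4 = 3) (h19 : 19 ≤ n)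
    (hk1 : 1 ≤ k) (hk2 : k ≤ n) : SkSpec3 n k (skA n k) := by
  obtain ⟨m, rfl⟩ : ∃ m, n = 4 * m + 3 := ⟨n/4, by omega⟩
  have hq : (4 * m + 3) / 4 = m := by omega
  unfold skA SkSpec3
  rw [if_neg (by omega), if_neg (by omega), hq]
  split_ifs with ho h2 h3 h4 h5 h6 h7 h8
  · exact Or.inl ⟨ho, h2, by omega, by omega⟩
  · exact Or.inr <| Or.inl ⟨h3, by omega⟩
  · exact Or.inr <| Or.inr <| Or.inl ⟨ho, by omega, by omega, by omega⟩
  · exact Or.inr <| Or.inr <| Or.inr <| Or.inl ⟨h4, by omega⟩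
  · exact Or.inr <| Or.inr <| Or.inr <| Or.inr <| Or.inl ⟨by omega, h5, by omega, by omega⟩
  · exact Or.inr <| Or.inr <| Or.inr <| Or.inr <| Or.inr <| Or.inl ⟨by omega, h6, by omega, by omega⟩
  · exact Or.inr <| Or.inr <| Or.inr <| Or.inr <| Or.inr <| Or.inr <| Or.inl ⟨by omega, h7, by omega, by omega⟩
  · exact Or.inr <| Or.inr <| Or.inr <| Or.inr <| Or.inr <| Or.inr <| Or.inr <| Or.inl ⟨by omega, h8, by omega, by omega⟩
  · exact Or.inr <| Or.inr <| Or.inr <| Or.inr <| Or.inr <| Or.inr <| Or.inr <| Or.inr ⟨by omega, by omega⟩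

/-- Bounds and disjointness of the pair positions. -/
abbrev SkOK (n : ℕ) : Prop :=
  (∀ k ∈ Finset.Icc 1 n, ∀ e : Bool, skA n k + (cond e (k+1) 0) < 2*n) ∧
  (∀ k ∈ Finset.Icc 1 n, ∀ l ∈ Finset.Icc 1 n, ∀ e f : Bool,
    skA n k + (cond e (k+1) 0) = skA n l + (cond f (l+1) 0) → k = l ∧ e = f)

set_option maxHeartbeats 3000000 in
lemma skOK {n : ℕ} (h : n % 4 = 0 ∨ n % 4 = 3) : SkOK n := by
  by_cases hbig : (n % 4 = 0 ∧ 16 ≤ n) ∨ (n % 4 = 3 ∧ 19 ≤ n)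
  case neg =>
    have hn : n < 19 := by omega
    interval_cases n <;> first | decide | (exfalso; omega)
  case pos =>
    constructor
    · intro k hk e
      rw [Finset.mem_Icc] at hk
      obtain ⟨hk1, hk2⟩ := hk
      rcases hbig with ⟨hm, hg⟩ | ⟨hm, hg⟩
      · have s := skA_spec0 hm hg hk1 hk2
        unfold SkSpec0 at s
        cases e <;> simp only [cond] <;>
          rcases s with s|s|s|s|s|s|s <;> omega
      · have s := skA_spec3 hm hg hk1 hk2
        unfold SkSpec3 at s
        cases e <;> simp only [cond] <;>
          rcases s with s|s|s|s|s|s|s|s|s <;> omega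
    · intro k hk l hl e f heq
      rw [Finset.mem_Icc] at hk hl
      obtain ⟨hk1, hk2⟩ := hk
      obtain ⟨hl1, hl2⟩ := hl
      rcases hbig with ⟨hm, hg⟩ | ⟨hm, hg⟩
      · have s1 := skA_spec0 hm hg hk1 hk2
        have s2 := skA_spec0 hm hg hl1 hl2
        unfold SkSpec0 at s1 s2
        cases e <;> cases f <;> simp only [cond] at heq
        · exact ⟨by rcases s1 with s1|s1|s1|s1|s1|s1|s1 <;>
            rcases s2 with s2|s2|s2|s2|s2|s2|s2 <;> omega, rfl⟩
        · exact absurd heq (by rcases s1 with s1|s1|s1|s1|s1|s1|s1 <;>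
            rcases s2 with s2|s2|s2|s2|s2|s2|s2 <;> omega)
        · exact absurd heq (by rcases s1 with s1|s1|s1|s1|s1|s1|s1 <;>
            rcases s2 with s2|s2|s2|s2|s2|s2|s2 <;> omega)
        · exact ⟨by rcases s1 with s1|s1|s1|s1|s1|s1|s1 <;>
            rcases s2 with s2|s2|s2|s2|s2|s2|s2 <;> omega, rfl⟩
      · have s1 := skA_spec3 hm hg hk1 hk2
        have s2 := skA_spec3 hm hg hl1 hl2
        unfold SkSpec3 at s1 s2
        cases e <;> cases f <;> simp only [cond] at heq
        · exact ⟨by rcases s1 with s1|s1|s1|s1|s1|s1|s1|s1|s1 <;>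
            rcases s2 with s2|s2|s2|s2|s2|s2|s2|s2|s2 <;> omega, rfl⟩
        · exact absurd heq (by rcases s1 with s1|s1|s1|s1|s1|s1|s1|s1|s1 <;>
            rcases s2 with s2|s2|s2|s2|s2|s2|s2|s2|s2 <;> omega)
        · exact absurd heq (by rcases s1 with s1|s1|s1|s1|s1|s1|s1|s1|s1 <;>
            rcases s2 with s2|s2|s2|s2|s2|s2|s2|s2|s2 <;> omega)
        · exact ⟨by rcases s1 with s1|s1|s1|s1|s1|s1|s1|s1|s1 <;>
            rcases s2 with s2|s2|s2|s2|s2|s2|s2|s2|s2 <;> omega, rfl⟩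

open Classical in
/-- The Langford-style sequence itself. -/
noncomputable def lf (n : ℕ) : ℕ → ℕ := fun i =>
  if h : ∃ k, 1 ≤ k ∧ k ≤ n ∧ (i = skA n k ∨ i = skA n k + (k+1)) then h.choose else 0

lemma lf_eq {n : ℕ} (h : n % 4 = 0 ∨ n % 4 = 3) {k i : ℕ} (hk1 : 1 ≤ k) (hk2 : k ≤ n)
    (hi : i = skA n k ∨ i = skA n k + (k+1)) : lf n i = k := by
  unfold lf
  split
  case isTrue hex =>
    obtain ⟨h1, h2, h3⟩ := hex.choose_spec
    have hKey := (skOK h).2 hex.choose (Finset.mem_Icc.mpr ⟨h1, h2⟩) k (Finset.mem_Icc.mpr ⟨hk1, hk2⟩)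
    rcases h3 with h3 | h3 <;> rcases hi with hi | hi
    · exact (hKey false false (by simp only [cond]; omega)).1
    · exact (hKey false true (by simp only [cond]; omega)).1
    · exact (hKey true false (by simp only [cond]; omega)).1
    · exact (hKey true true (by simp only [cond]; omega)).1
  case isFalse hex => exact absurd ⟨k, hk1, hk2, hi⟩ hex

lemma lf_cover {n : ℕ} (h : n % 4 = 0 ∨ n % 4 = 3) :
    ∀ i, i < 2*n → ∃ k, 1 ≤ k ∧ k ≤ n ∧ (i = skA n k ∨ i = skA n k + (k+1)) := by
  classical
  have hinj : Set.InjOn (fun p : ℕ × Bool => skA n p.1 + cond p.2 (p.1+1) 0)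
      (((Finset.Icc 1 n) ×ˢ (Finset.univ : Finset Bool) : Finset (ℕ × Bool)) : Set (ℕ × Bool)) := by
    intro p hp q hq hpq
    simp only [Finset.coe_product, Set.mem_prod, Finset.mem_coe, Finset.mem_Icc,
      Finset.mem_univ] at hp hq
    have := (skOK h).2 p.1 (Finset.mem_Icc.mpr hp.1) q.1 (Finset.mem_Icc.mpr hq.1) p.2 q.2 hpq
    exact Prod.ext_iff.mpr ⟨this.1, this.2⟩
  have himg : ((Finset.Icc 1 n) ×ˢ (Finset.univ : Finset Bool)).image
      (fun p : ℕ × Bool => skA n p.1 + cond p.2 (p.1+1) 0) = Finset.range (2*n) := by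
    apply Finset.eq_of_subset_of_card_le
    · intro x hx
      simp only [Finset.mem_image, Finset.mem_product, Finset.mem_Icc, Finset.mem_univ] at hx
      obtain ⟨p, ⟨⟨hp1, hp2⟩, -⟩, rfl⟩ := hx
      exact Finset.mem_range.mpr ((skOK h).1 p.1 (Finset.mem_Icc.mpr ⟨hp1, hp2⟩) p.2)
    · rw [Finset.card_range, Finset.card_image_of_injOn hinj, Finset.card_product,
        Nat.card_Icc, Finset.card_univ, Fintype.card_bool]
      omega
  intro i hi
  have hmem : i ∈ ((Finset.Icc 1 n) ×ˢ (Finset.univ : Finset Bool)).image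
      (fun p : ℕ × Bool => skA n p.1 + cond p.2 (p.1+1) 0) := by
    rw [himg]; exact Finset.mem_range.mpr hi
  simp only [Finset.mem_image, Finset.mem_product, Finset.mem_Icc, Finset.mem_univ] at hmem
  obtain ⟨⟨k, e⟩, ⟨⟨h1, h2⟩, -⟩, he⟩ := hmem
  refine ⟨k, h1, h2, ?_⟩
  cases e
  · left; simp only [cond] at he; omega
  · right; simp only [cond] at he; omega

theorem skolem_exists_aux (n : ℕ) (h : n % 4 = 0 ∨ n % 4 = 3) :
    ∃ ζ : ℕ → ℕ, IsSkolem n ζ := by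
  classical
  refine ⟨lf n, ?_, ?_⟩
  · -- multiset condition
    have hfilter : ∀ v, 1 ≤ v → v ≤ n →
        (Finset.range (2*n)).filter (fun i => v = lf n i)
          = {skA n v, skA n v + (v+1)} := by
      intro v hv1 hv2
      ext i
      simp only [Finset.mem_filter, Finset.mem_range, Finset.mem_insert, Finset.mem_singleton]
      constructor
      · rintro ⟨hiN, hv⟩
        obtain ⟨k, h1, h2, h3⟩ := lf_cover h i hiN
        have hlf := lf_eq h h1 h2 h3
        have : v = k := by rw [hv, hlf]
        subst this
        exact h3
      · intro hi
        refine ⟨?_, (lf_eq h hv1 hv2 hi).symm⟩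
        have b1 := (skOK h).1 v (Finset.mem_Icc.mpr ⟨hv1, hv2⟩) false
        have b2 := (skOK h).1 v (Finset.mem_Icc.mpr ⟨hv1, hv2⟩) true
        simp only [cond] at b1 b2
        rcases hi with h' | h' <;> omega
    have hfilter0 : ∀ v, ¬(1 ≤ v ∧ v ≤ n) →
        (Finset.range (2*n)).filter (fun i => v = lf n i) = ∅ := by
      intro v hv
      rw [Finset.filter_eq_empty_iff]
      intro i hi
      obtain ⟨k, h1, h2, h3⟩ := lf_cover h i (Finset.mem_range.mp hi)
      rw [lf_eq h h1 h2 h3]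
      omega
    refine Multiset.ext.mpr fun v => ?_
    rw [Multiset.count_add]
    have hL : ((List.range (2*n)).map (lf n) : Multiset ℕ)
        = Multiset.map (lf n) ((Finset.range (2*n)).val) := rfl
    rw [hL, Multiset.count_map, ← Finset.filter_val]
    by_cases hv : 1 ≤ v ∧ v ≤ n
    · rw [hfilter v hv.1 hv.2]
      have hmem : v ∈ Finset.Icc 1 n := Finset.mem_Icc.mpr hv
      rw [Multiset.count_eq_one_of_mem (Finset.Icc 1 n).nodup hmem]
      have hne : skA n v ≠ skA n v + (v+1) := by omega
      have hcard : ({skA n v, skA n v + (v+1)} : Finset ℕ).card = 2 := by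
        rw [Finset.card_insert_of_notMem (by simp only [Finset.mem_singleton]; exact hne),
          Finset.card_singleton]
      exact hcard
    · rw [hfilter0 v hv]
      have hnm : v ∉ Finset.Icc 1 n := by simp [Finset.mem_Icc]; omega
      rw [Multiset.count_eq_zero_of_notMem hnm]
      rfl
  · -- Skolem property
    intro i j hij hjN hEq
    have hiN : i < 2*n := lt_trans hij hjN
    obtain ⟨k, hk1, hk2, hk3⟩ := lf_cover h i hiN
    obtain ⟨l, hl1, hl2, hl3⟩ := lf_cover h j hjN
    have e1 := lf_eq h hk1 hk2 hk3
    have e2 := lf_eq h hl1 hl2 hl3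
    have hkl : k = l := by omega
    subst hkl
    rw [e1]
    rcases hk3 with h' | h' <;> rcases hl3 with h'' | h'' <;> omega


/-- If n ≡ 0 or 3 (mod 4), then a Skolem sequence of order n exists. -/
theorem skolem_exists (n : ℕ) (h : n % 4 = 0 ∨ n % 4 = 3) :
    ∃ ζ : ℕ → ℕ, IsSkolem n ζ := skolem_exists_aux n h
end

section
/- An extended Skolem sequence of order n exists if n ≡ 0 or 3 (mod 4). -/
/- ----------------  auxiliary material  ---------------- -/

lemma essHalf (n : ℕ) :
    (↑((List.range (2 * (n + 1))).map (fun x => x / 2)) : Multiset ℕ) =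
      (Finset.Icc 0 n).val + (Finset.Icc 0 n).val := by
  induction n with
  | zero => decide
  | succ n ih =>
    have e : 2 * (n + 1 + 1) = (2 * (n + 1)) + 1 + 1 := by ring
    have e1 : (2 * (n + 1)) / 2 = n + 1 := by omega
    have e2 : (2 * (n + 1) + 1) / 2 = n + 1 := by omega
    have e3 : Finset.Icc 0 (n + 1) = insert (n + 1) (Finset.Icc 0 n) := by
      ext x; simp [Finset.mem_Icc]; omega
    have e4 : (n : ℕ) + 1 ∉ Finset.Icc 0 n := by simp
    rw [e, List.range_succ, List.range_succ, List.map_append, List.map_append, e3,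
      Finset.insert_val_of_notMem e4]
    simp only [List.map_cons, List.map_nil, e1, e2]
    have e5 : (↑((((List.range (2 * (n + 1))).map (fun x => x / 2) ++ [n + 1]) ++ [n + 1]
        : List ℕ)) : Multiset ℕ)
        = (↑((List.range (2 * (n + 1))).map (fun x => x / 2)) : Multiset ℕ)
          + {n + 1} + {n + 1} := rfl
    rw [List.append_assoc] at e5 ⊢
    rw [e5, ih]
    simp only [← Multiset.singleton_add]
    abel

set_option maxHeartbeats 1000000 in
/-- Assembly: a position function `P` on `range (2(n+1))` (index `2k+c` ↦ position of
copy `c` of value `k`) which is injective, bounded, and has the step property,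
yields an extended Skolem sequence. -/
theorem key (n : ℕ) (P : ℕ → ℕ)
    (hlt : ∀ m, m < 2 * (n + 1) → P m < 2 * (n + 1))
    (hinj : ∀ a, a < 2 * (n + 1) → ∀ b, b < 2 * (n + 1) → P a = P b → a = b)
    (hstep : ∀ k, k ≤ n → P (2 * k + 1) = P (2 * k) + k + 1) :
    ∃ ζ : ℕ → ℕ, IsESS n ζ := by
  classical
  set L := 2 * (n + 1) with hL
  set ζ : ℕ → ℕ := fun i =>
    if h : ∃ x, x < L ∧ P x = i then (Classical.choose h) / 2 else 0 with hζ
  have hζP : ∀ x, x < L → ζ (P x) = x / 2 := by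
    intro x hx
    have hex : ∃ y, y < L ∧ P y = P x := ⟨x, hx, rfl⟩
    have hspec := Classical.choose_spec hex
    have : Classical.choose hex = x := hinj _ hspec.1 _ hx hspec.2
    simp only [hζ, dif_pos hex, this]
  -- permutation fact
  have hnodup : ((List.range L).map P).Nodup := by
    refine List.Nodup.map_on ?_ List.nodup_range
    intro x hx y hy hxy
    exact hinj x (List.mem_range.mp hx) y (List.mem_range.mp hy) hxy
  have hsub : ((List.range L).map P) ⊆ List.range L := by
    intro y hy
    simp only [List.mem_map, List.mem_range] at hy ⊢
    obtain ⟨x, hx, rfl⟩ := hy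
    exact hlt x hx
  have hperm : ((List.range L).map P).Perm (List.range L) := by
    have h1 : List.Subperm ((List.range L).map P) (List.range L) :=
      List.subperm_of_subset hnodup hsub
    exact h1.perm_of_length_le (by simp)
  -- surjectivity
  have hcard : ((Finset.range L).image P).card = L := by
    rw [Finset.card_image_of_injOn, Finset.card_range]
    intro a ha b hb hab
    exact hinj a (by simpa using ha) b (by simpa using hb) hab
  have himg : (Finset.range L).image P = Finset.range L := by
    apply Finset.eq_of_subset_of_card_le
    · intro y hy
      simp only [Finset.mem_image, Finset.mem_range] at hy ⊢
      obtain ⟨x, hx, rfl⟩ := hy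
      exact hlt x hx
    · rw [hcard, Finset.card_range]
  have hsurj : ∀ i, i < L → ∃ x, x < L ∧ P x = i := by
    intro i hi
    have : i ∈ (Finset.range L).image P := by rw [himg]; exact Finset.mem_range.mpr hi
    simp only [Finset.mem_image, Finset.mem_range] at this
    obtain ⟨x, hx, hxi⟩ := this
    exact ⟨x, hx, hxi⟩
  refine ⟨ζ, ?_, ?_⟩
  · -- multiset condition
    have h3 := hperm.map ζ
    rw [List.map_map] at h3
    have h4 : (List.range L).map (ζ ∘ P) = (List.range L).map (fun x => x / 2) :=
      List.map_congr_left (fun x hx => hζP x (List.mem_range.mp hx))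
    rw [h4] at h3
    have h5 : (↑((List.range L).map ζ) : Multiset ℕ)
        = (↑((List.range L).map (fun x => x / 2)) : Multiset ℕ) :=
      (Multiset.coe_eq_coe.mpr h3).symm
    rw [h5]
    exact essHalf n
  · -- Skolem property
    intro i j hij hjL hζij
    have hiL : i < L := lt_trans hij hjL
    obtain ⟨x, hx, hxi⟩ := hsurj i hiL
    obtain ⟨y, hy, hyj⟩ := hsurj j hjL
    have hzi : ζ i = x / 2 := by rw [← hxi]; exact hζP x hx
    have hzj : ζ j = y / 2 := by rw [← hyj]; exact hζP y hy
    have hxy2 : x / 2 = y / 2 := by rw [← hzi, ← hzj]; exact hζij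
    have hxyne : x ≠ y := by
      intro hcon; rw [hcon, hyj] at hxi; omega
    set k := x / 2 with hk
    have hkn : k ≤ n := by omega
    have hPk := hstep k hkn
    -- x and y are 2k and 2k+1 in some order
    rcases (by omega : (x = 2 * k ∧ y = 2 * k + 1) ∨ (x = 2 * k + 1 ∧ y = 2 * k))
      with ⟨hx2, hy2⟩ | ⟨hx2, hy2⟩
    · rw [hx2] at hxi; rw [hy2] at hyj
      omega
    · rw [hx2] at hxi; rw [hy2] at hyj
      omega

/- ----------------  explicit constructions  ---------------- -/

/-- Position of the first copy of the pair with difference `d`, case `N = 4m` (`n = 4m-1`). -/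
def B3 (m d : ℕ) : ℕ :=
  if d % 2 = 0 then 2 * m - d / 2
  else if d = 1 then 7 * m - 1
  else if d = 2 * m - 1 then 4 * m + 1
  else if d = 4 * m - 1 then 2 * m
  else if 2 * m + 1 ≤ d then 4 * m + 2 + (4 * m - 3 - d) / 2
  else 5 * m + 1 + (2 * m - 3 - d) / 2

/-- Position of the first copy of the pair with difference `d`, case `N = 4m+1` (`n = 4m`). -/
def B4 (m d : ℕ) : ℕ :=
  if d % 2 = 1 then (if d = 1 then 7 * m else (4 * m + 1 - d) / 2)
  else if d = 4 * m then 2 * m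
  else if d = 4 * m - 2 then 2 * m + 1
  else if d = 2 * m + 2 then 6 * m - 2
  else if d = 2 then 8 * m - 1
  else if 2 * m + 4 ≤ d then 4 * m + 2 + (4 * m - 4 - d) / 2
  else 5 * m - 1 + (2 * m - d) / 2

def Pgen (B : ℕ → ℕ) (x : ℕ) : ℕ :=
  if x % 2 = 0 then B (x / 2 + 1) else B (x / 2 + 1) + (x / 2 + 1)

set_option maxHeartbeats 12000000 in
lemma case3 (m : ℕ) (hm : 2 ≤ m) : ∃ ζ : ℕ → ℕ, IsESS (4 * m - 1) ζ := by
  apply key _ (Pgen (B3 m))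
  · intro x hx
    simp only [Pgen, B3]
    split_ifs <;> omega
  · intro a ha b hb hab
    simp only [Pgen, B3] at hab
    split_ifs at hab <;> omega
  · intro k hk
    simp only [Pgen, B3]
    split_ifs <;> omega

set_option maxHeartbeats 12000000 in
lemma case4 (m : ℕ) (hm : 3 ≤ m) : ∃ ζ : ℕ → ℕ, IsESS (4 * m) ζ := by
  apply key _ (Pgen (B4 m))
  · intro x hx
    simp only [Pgen, B4]
    split_ifs <;> omega
  · intro a ha b hb hab
    simp only [Pgen, B4] at hab
    split_ifs at hab <;> omega
  · intro k hk
    simp only [Pgen, B4]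
    split_ifs <;> omega

lemma caseN0 : ∃ ζ : ℕ → ℕ, IsESS 0 ζ := by
  apply key _ (fun x => [0, 1].getD x 0) <;> decide

lemma caseN3 : ∃ ζ : ℕ → ℕ, IsESS 3 ζ := by
  apply key _ (fun x => [6, 7, 2, 4, 0, 3, 1, 5].getD x 0) <;> decide

lemma caseN4 : ∃ ζ : ℕ → ℕ, IsESS 4 ζ := by
  apply key _ (fun x => [8, 9, 1, 3, 4, 7, 2, 6, 0, 5].getD x 0) <;> decide

lemma caseN8 : ∃ ζ : ℕ → ℕ, IsESS 8 ζ := by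
  apply key _ (fun x => [16, 17, 13, 15, 3, 6, 10, 14, 2, 7, 5, 11, 1, 8, 4, 12, 0, 9].getD x 0) <;>
    decide

/-- An extended Skolem sequence of order n exists if n ≡ 0 or 3 (mod 4). -/
theorem ess_exists (n : ℕ) (h : n % 4 = 0 ∨ n % 4 = 3) :
    ∃ ζ : ℕ → ℕ, IsESS n ζ := by
  rcases h with h | h
  · rcases Nat.lt_or_ge n 12 with hn | hn
    · interval_cases n <;>
        first
          | exact caseN0
          | exact caseN4
          | exact caseN8
          | exact absurd h (by decide)
    · have e : n = 4 * (n / 4) := by omega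
      rw [e]
      exact case4 (n / 4) (by omega)
  · rcases Nat.lt_or_ge n 7 with hn | hn
    · interval_cases n <;>
        first
          | exact caseN3
          | exact absurd h (by decide)
    · have e : n = 4 * ((n + 1) / 4) - 1 := by omega
      rw [e]
      exact case3 ((n + 1) / 4) (by omega)
end

section
/- Let u be an ESS of order N−1 with sequence length 2N. For integers α, β with α − β ≡ g (mod 2N), g ≠ 0, and |g| ≤ N, the set of delivery channels C(shift(u,α), shift(u,β)) equals the singleton {|g| − 1}. -/
private lemma emod_eq_of_dvd_sub {L x : ℤ} {k : ℕ} (hk : (k:ℤ) < L)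
    (hdvd : L ∣ x - k) : x % L = (k:ℤ) := by
  have h1 : (k:ℤ) ≡ x [ZMOD L] := (Int.modEq_iff_dvd).2 hdvd
  have h2 : x % L = (k:ℤ) % L := h1.symm
  rw [h2, Int.emod_eq_of_lt (by positivity) hk]

private lemma exists_two_indices {m : ℕ} {u : ℕ → ℕ} {x : ℕ}
    (hc : 2 ≤ ((List.range m).map u : Multiset ℕ).count x) :
    ∃ i j, i < j ∧ j < m ∧ u i = x ∧ u j = x := by
  have he : ((List.range m).map u : Multiset ℕ) = (Finset.range m).val.map u := by
    rfl
  rw [he, Multiset.count_map] at hc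
  have hcard : 1 < ((Finset.range m).filter (fun a => x = u a)).card := by
    rw [Finset.card_def, Finset.filter_val]; omega
  obtain ⟨i, hi, j, hj, hij⟩ := Finset.one_lt_card.1 hcard
  simp only [Finset.mem_filter, Finset.mem_range] at hi hj
  rcases hij.lt_or_gt with h | h
  · exact ⟨i, j, h, hj.1, hi.2.symm, hj.2.symm⟩
  · exact ⟨j, i, h, hi.1, hj.2.symm, hi.2.symm⟩

/-- If the relative drift is g mod 2N with 0 < |g| ≤ N, the delivery-channel
set is the singleton {|g| − 1}. -/
theorem deliveryChannels_singleton (N : ℕ) (hN : 1 ≤ N) (u : ℕ → ℕ)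
    (hu : IsESS (N - 1) u) (α β g : ℤ)
    (hg : (2 * (N : ℤ)) ∣ (α - β - g)) (hg0 : g ≠ 0) (hgN : |g| ≤ (N : ℤ)) :
    deliveryChannels (2 * N) (shiftZ u (2 * N) α) (shiftZ u (2 * N) β) =
      {g.natAbs - 1} := by
  obtain ⟨hperm, hsk⟩ := hu
  have hL2 : 2 * (N - 1 + 1) = 2 * N := by omega
  rw [hL2] at hperm hsk
  set M : ℤ := 2 * (N : ℤ) with hMdef
  have hM : ((2*N : ℕ) : ℤ) = M := by push_cast; ring
  have hNz : (1 : ℤ) ≤ (N:ℤ) := by exact_mod_cast hN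
  have hMpos : 0 < M := by omega
  set G : ℕ := g.natAbs with hGdef
  have hGg : g = (G:ℤ) ∨ g = -(G:ℤ) := Int.natAbs_eq g
  have hG1 : 1 ≤ G := by
    rcases hGg with h | h <;> [skip; skip] <;>
    · by_contra hc
      apply hg0
      omega
  have hGN : (G:ℤ) ≤ (N:ℤ) := by
    rw [hGdef, ← Int.abs_eq_natAbs]; exact hgN
  -- bound lemma
  have hbound : ∀ t, t < 2*N → u t ≤ N-1 := by
    intro t ht
    have hm : u t ∈ ((List.range (2*N)).map u : Multiset ℕ) := by
      simp only [Multiset.mem_coe, List.mem_map]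
      exact ⟨t, List.mem_range.2 ht, rfl⟩
    rw [hperm] at hm
    rcases Multiset.mem_add.1 hm with h | h <;>
      · have := Finset.mem_Icc.1 (Finset.mem_def.2 h); omega
  -- count lemma
  have hcount : ∀ x, x ≤ N-1 → ((List.range (2*N)).map u : Multiset ℕ).count x = 2 := by
    intro x hx
    have hmem : x ∈ Finset.Icc 0 (N-1) := Finset.mem_Icc.2 ⟨Nat.zero_le _, hx⟩
    have h1 : (Finset.Icc 0 (N-1)).val.count x = 1 :=
      Multiset.count_eq_one_of_mem (Finset.Icc 0 (N-1)).nodup hmem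
    rw [hperm, Multiset.count_add, h1]
  ext h
  simp only [deliveryChannels, Set.mem_setOf_eq, Set.mem_singleton_iff, shiftZ, hM]
  constructor
  · rintro ⟨t, ht, ha, hb⟩
    set a := (((t:ℤ)+α) % M).toNat with hadef
    set b := (((t:ℤ)+β) % M).toNat with hbdef
    have haz : (a:ℤ) = ((t:ℤ)+α) % M := Int.toNat_of_nonneg (Int.emod_nonneg _ hMpos.ne')
    have hbz : (b:ℤ) = ((t:ℤ)+β) % M := Int.toNat_of_nonneg (Int.emod_nonneg _ hMpos.ne')
    have haL : a < 2*N := by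
      have := Int.emod_lt_of_pos ((t:ℤ)+α) hMpos
      omega
    have hbL : b < 2*N := by
      have := Int.emod_lt_of_pos ((t:ℤ)+β) hMpos
      omega
    have hdvd : M ∣ ((a:ℤ) - b - g) := by
      have he : (a:ℤ) - b - g =
          (α - β - g) + M * (((t:ℤ)+β)/M - ((t:ℤ)+α)/M) := by
        rw [haz, hbz, Int.emod_def, Int.emod_def]; ring
      rw [he]
      exact dvd_add hg (Dvd.intro _ rfl)
    have habs := abs_le.1 hgN
    have hab : a ≠ b := by
      intro he
      rw [he] at hdvd
      have h2 : M ∣ g := dvd_neg.1 (by simpa using hdvd)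
      obtain ⟨c, hcp⟩ := h2
      rcases le_or_gt c (-1) with hcc | hcc
      · have h3 : M*c ≤ M*(-1) := mul_le_mul_of_nonneg_left hcc hMpos.le
        linarith [habs.1, habs.2]
      rcases le_or_gt 1 c with hcc2 | hcc2
      · have h3 : M*1 ≤ M*c := mul_le_mul_of_nonneg_left hcc2 hMpos.le
        linarith [habs.2]
      · have hcz : c = 0 := by omega
        rw [hcz, mul_zero] at hcp
        exact hg0 hcp
    have hhb : h ≤ N - 1 := by rw [← ha]; exact hbound a haL
    rcases hab.lt_or_gt with hlt | hlt
    · have hskab := hsk a b hlt hbL (ha.trans hb.symm)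
      rw [ha] at hskab
      have hd : (b:ℤ) - a = (h:ℤ) + 1 := by omega
      have hdvd2 : M ∣ ((h:ℤ) + 1 + g) := by
        have he : (h:ℤ)+1+g = -((a:ℤ) - b - g) := by rw [← hd]; ring
        rw [he]; exact dvd_neg.2 hdvd
      obtain ⟨c, hc⟩ := hdvd2
      have hh0 : (0:ℤ) ≤ (h:ℤ) := Int.natCast_nonneg h
      have hhN : (h:ℤ) + 1 ≤ (N:ℤ) := by omega
      have hc0 : c = 0 ∨ c = 1 := by
        rcases le_or_gt c (-1) with hcc | hcc
        · exfalso
          have h2 : M*c ≤ M*(-1) := mul_le_mul_of_nonneg_left hcc hMpos.le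
          linarith [habs.1]
        rcases le_or_gt 2 c with hcc2 | hcc2
        · exfalso
          have h2 : M*2 ≤ M*c := mul_le_mul_of_nonneg_left hcc2 hMpos.le
          linarith [habs.2]
        · omega
      rcases hc0 with rfl | rfl <;> rw [hMdef] at hc <;>
        rcases hGg with h' | h' <;> omega
    · have hskab := hsk b a hlt haL (hb.trans ha.symm)
      rw [hb] at hskab
      have hd : (a:ℤ) - b = (h:ℤ) + 1 := by omega
      have hdvd2 : M ∣ ((h:ℤ) + 1 - g) := by
        have he : (h:ℤ)+1-g = ((a:ℤ) - b - g) := by rw [hd]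
        rw [he]; exact hdvd
      obtain ⟨c, hc⟩ := hdvd2
      have hh0 : (0:ℤ) ≤ (h:ℤ) := Int.natCast_nonneg h
      have hhN : (h:ℤ) + 1 ≤ (N:ℤ) := by omega
      have hc0 : c = 0 ∨ c = 1 := by
        rcases le_or_gt c (-1) with hcc | hcc
        · exfalso
          have h2 : M*c ≤ M*(-1) := mul_le_mul_of_nonneg_left hcc hMpos.le
          linarith [habs.2]
        rcases le_or_gt 2 c with hcc2 | hcc2
        · exfalso
          have h2 : M*2 ≤ M*c := mul_le_mul_of_nonneg_left hcc2 hMpos.le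
          linarith [habs.1]
        · omega
      rcases hc0 with rfl | rfl <;> rw [hMdef] at hc <;>
        rcases hGg with h' | h' <;> omega
  · rintro rfl
    have hGN' : G - 1 ≤ N - 1 := by omega
    obtain ⟨i, j, hij, hjL, hui, huj⟩ :=
      exists_two_indices (le_of_eq (hcount (G-1) hGN').symm)
    have hji := hsk i j hij hjL (hui.trans huj.symm)
    rw [hui] at hji
    have hjiG : (j:ℤ) - i = (G:ℤ) := by omega
    rcases hGg with hGg | hGg
    · refine ⟨(((j:ℤ) - α) % M).toNat, ?_, ?_, ?_⟩
      · have h1 := Int.emod_lt_of_pos ((j:ℤ) - α) hMpos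
        have h2 := Int.emod_nonneg ((j:ℤ) - α) hMpos.ne'
        omega
      · have tz : ((((j:ℤ) - α) % M).toNat : ℤ) = ((j:ℤ) - α) % M :=
          Int.toNat_of_nonneg (Int.emod_nonneg _ hMpos.ne')
        have e1 : ((((j:ℤ) - α) % M).toNat + α) % M = ((j:ℕ):ℤ) := by
          apply emod_eq_of_dvd_sub (by omega)
          refine ⟨-(((j:ℤ)-α)/M), ?_⟩
          rw [tz, Int.emod_def]; ring
        rw [e1]
        simpa using huj
      · obtain ⟨c, hcg⟩ := hg
        have tz : ((((j:ℤ) - α) % M).toNat : ℤ) = ((j:ℤ) - α) % M :=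
          Int.toNat_of_nonneg (Int.emod_nonneg _ hMpos.ne')
        have e2 : ((((j:ℤ) - α) % M).toNat + β) % M = ((i:ℕ):ℤ) := by
          apply emod_eq_of_dvd_sub (by omega)
          refine ⟨-c - ((j:ℤ)-α)/M, ?_⟩
          rw [tz, Int.emod_def]
          have : (j:ℤ) - i = g := by omega
          linear_combination this - hcg
        rw [e2]
        simpa using hui
    · refine ⟨(((i:ℤ) - α) % M).toNat, ?_, ?_, ?_⟩
      · have h1 := Int.emod_lt_of_pos ((i:ℤ) - α) hMpos
        have h2 := Int.emod_nonneg ((i:ℤ) - α) hMpos.ne'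
        omega
      · have tz : ((((i:ℤ) - α) % M).toNat : ℤ) = ((i:ℤ) - α) % M :=
          Int.toNat_of_nonneg (Int.emod_nonneg _ hMpos.ne')
        have e1 : ((((i:ℤ) - α) % M).toNat + α) % M = ((i:ℕ):ℤ) := by
          apply emod_eq_of_dvd_sub (by omega)
          refine ⟨-(((i:ℤ)-α)/M), ?_⟩
          rw [tz, Int.emod_def]; ring
        rw [e1]
        simpa using hui
      · obtain ⟨c, hcg⟩ := hg
        have tz : ((((i:ℤ) - α) % M).toNat : ℤ) = ((i:ℤ) - α) % M :=
          Int.toNat_of_nonneg (Int.emod_nonneg _ hMpos.ne')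
        have e2 : ((((i:ℤ) - α) % M).toNat + β) % M = ((j:ℕ):ℤ) := by
          apply emod_eq_of_dvd_sub (by omega)
          refine ⟨-c - ((i:ℤ)-α)/M, ?_⟩
          rw [tz, Int.emod_def]
          have : (i:ℤ) - j = g := by omega
          linear_combination this - hcg
        rw [e2]
        simpa using huj
end

section
/- Let u be an ESS of order N−1 with sequence length 2N. For any integers α, β, the set of delivery channels C(shift(u,α), shift(u,β)) is nonempty; equivalently, any two cyclic rotations of u overlap in at least one position with equal values. -/
-- auxiliary occurrence lemma
lemma occ (n : ℕ) (u : ℕ → ℕ) (hu : IsESS n u) (h : ℕ) (hh : h ≤ n) :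
    ∃ i, i + h + 1 < 2 * (n + 1) ∧ u i = h ∧ u (i + h + 1) = h := by
  have hcard : ((Finset.range (2 * (n+1))).filter (fun i => u i = h)).card = 2 := by
    have : Multiset.count h (↑((List.range (2 * (n+1))).map u) : Multiset ℕ)
        = ((Finset.range (2 * (n+1))).filter (fun i => u i = h)).card := by
      rw [← Multiset.map_coe, Multiset.count_map, Finset.card_filter]
      simp [eq_comm, Finset.range, Multiset.range]
      congr 1
    rw [hu.1] at this
    rw [← this, Multiset.count_add]
    have hm : h ∈ (Finset.Icc 0 n).val := (by rw [Finset.mem_val]; simp [hh])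
    rw [Multiset.count_eq_one_of_mem (Finset.Icc 0 n).nodup hm]
  have h2 : 1 < ((Finset.range (2 * (n+1))).filter (fun i => u i = h)).card := by omega
  obtain ⟨a, ha, b, hb, hab⟩ := Finset.one_lt_card.1 h2
  simp only [Finset.mem_filter, Finset.mem_range] at ha hb
  rcases Nat.lt_or_ge a b with hlt | hge
  · have := hu.2 a b hlt hb.1 (ha.2.trans hb.2.symm)
    exact ⟨a, by omega, ha.2, by rw [ha.2] at this; have : b = a + h + 1 := by omega
                                 rw [← this]; exact hb.2⟩
  · have hlt : b < a := lt_of_le_of_ne hge (Ne.symm hab)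
    have := hu.2 b a hlt ha.1 (hb.2.trans ha.2.symm)
    refine ⟨b, by omega, hb.2, ?_⟩
    rw [hb.2] at this
    have : a = b + h + 1 := by omega
    rw [← this]; exact ha.2


/-- Any two cyclic rotations of an ESS overlap in at least one position with
equal values, i.e. the delivery-channel set is nonempty. -/
theorem deliveryChannels_nonempty (N : ℕ) (hN : 1 ≤ N) (u : ℕ → ℕ)
    (hu : IsESS (N - 1) u) (α β : ℤ) :
    (deliveryChannels (2 * N) (shiftZ u (2 * N) α) (shiftZ u (2 * N) β)).Nonempty := by
  set L : ℕ := 2 * N with hLdef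
  have hE : 2 * (N - 1 + 1) = L := by omega
  have hLpos : (0 : ℤ) < (L : ℤ) := by exact_mod_cast (by omega : 0 < L)
  set g : ℤ := β - α with hg
  set γ : ℕ := (g % L).toNat with hγdef
  have hγnn : 0 ≤ g % L := Int.emod_nonneg g (by omega)
  have hγcast : (γ : ℤ) = g % L := Int.toNat_of_nonneg hγnn
  have hγlt : γ < L := by
    have := Int.emod_lt_of_pos g hLpos
    omega
  have key : ∀ p : ℤ, (p + g) % L = (p + (g % L)) % L := by
    intro p
    conv_lhs => rw [← Int.emod_add_mul_ediv g (L : ℤ)]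
    rw [← add_assoc, Int.add_mul_emod_self_left]
  -- produce p q < L with u p = u q and ((p:ℤ) + g) % L = q
  have main : ∃ p q : ℕ, p < L ∧ q < L ∧ u p = u q ∧ ((p : ℤ) + g) % L = q := by
    rcases Nat.eq_zero_or_pos γ with h0 | hpos
    · refine ⟨0, 0, by omega, by omega, rfl, ?_⟩
      rw [key]
      simp [← hγcast, h0]
    · rcases le_or_gt γ N with hle | hgt
      · obtain ⟨i, hi, hui, huj⟩ := occ (N - 1) u hu (γ - 1) (by omega)
        rw [hE] at hi
        have hj : i + (γ - 1) + 1 = i + γ := by omega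
        refine ⟨i, i + γ, by omega, by omega,
          by rw [hui, show i + γ = i + (γ-1)+1 from by omega, huj], ?_⟩
        rw [key, ← hγcast]
        have : ((i : ℤ) + γ) = ((i + γ : ℕ) : ℤ) := by push_cast; ring
        rw [this, Int.emod_eq_of_lt (by positivity) (by exact_mod_cast (by omega : i + γ < L))]
      · obtain ⟨i, hi, hui, huj⟩ := occ (N - 1) u hu (L - γ - 1) (by omega)
        rw [hE] at hi
        have hj : i + (L - γ - 1) + 1 = i + (L - γ) := by omega
        rw [hj] at hi huj
        refine ⟨i + (L - γ), i, by omega, by omega, by rw [hui, huj], ?_⟩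
        rw [key, ← hγcast]
        have : ((i + (L - γ) : ℕ) : ℤ) + γ = (i : ℤ) + L := by
          have : (((L : ℕ) - γ : ℕ) : ℤ) = (L : ℤ) - γ := by
            exact_mod_cast Int.ofNat_sub (by omega)
          push_cast [this]; ring
        rw [this]
        have hiL : ((i : ℤ) + L) % L = (i : ℤ) % L := by
          have := Int.add_mul_emod_self_left (a := (i : ℤ)) (b := (L : ℤ)) (c := 1)
          simpa using this
        rw [hiL, Int.emod_eq_of_lt (by positivity) (by exact_mod_cast (by omega : i < L))]
  obtain ⟨p, q, hp, hq, hpq, hmod⟩ := main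
  refine ⟨u p, ((p - α) % L).toNat, ?_, ?_, ?_⟩
  · have h1 : 0 ≤ (p - α) % L := Int.emod_nonneg _ (by omega)
    have h2 := Int.emod_lt_of_pos ((p : ℤ) - α) hLpos
    omega
  · show u _ = u p
    congr 1
    have h1 : 0 ≤ (p - α) % L := Int.emod_nonneg _ (by omega)
    have : ((((p : ℤ) - α) % L).toNat : ℤ) = ((p : ℤ) - α) % L := Int.toNat_of_nonneg h1
    rw [this, Int.emod_add_emod]
    have : (p : ℤ) - α + α = p := by ring
    rw [this, Int.emod_eq_of_lt (by positivity) (by exact_mod_cast hp)]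
    simp
  · show u _ = u p
    have h1 : 0 ≤ (p - α) % L := Int.emod_nonneg _ (by omega)
    have hc : ((((p : ℤ) - α) % L).toNat : ℤ) = ((p : ℤ) - α) % L := Int.toNat_of_nonneg h1
    rw [hc, Int.emod_add_emod]
    have : (p : ℤ) - α + β = (p : ℤ) + g := by rw [hg]; ring
    rw [this, hmod]
    simp [hpq]
end

section
/- Let u be an ESS of order N−1 with sequence length 2N, and let α, β be integers with α − β ≡ g (mod 2N) where 0 < |g| < N. Then the set of delivery slots D(shift(u,α), shift(u,β)) has cardinality exactly 1. -/
/- ### Auxiliary lemmas -/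

lemma filter_card_ess {N : ℕ} (hN : 1 ≤ N) {u : ℕ → ℕ} (hu : IsESS (N-1) u) (c : ℕ) :
    ((Finset.range (2*N)).filter (fun s => u s = c)).card = if c < N then 2 else 0 := by
  obtain ⟨h1, -⟩ := hu
  have hL : 2 * (N - 1 + 1) = 2 * N := by omega
  rw [hL] at h1
  have h2 : Multiset.count c (↑((List.range (2*N)).map u) : Multiset ℕ)
      = ((Finset.range (2*N)).filter (fun s => u s = c)).card := by
    have e1 : (↑((List.range (2*N)).map u) : Multiset ℕ)
        = Multiset.map u (Finset.range (2*N)).val := by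
      rw [Finset.range_val, Multiset.range]; rfl
    have e2 : ((Finset.range (2*N)).filter (fun s => u s = c)).card
        = Multiset.card (Multiset.filter (fun a => u a = c) (Finset.range (2*N)).val) := by
      rw [← Finset.filter_val]; rfl
    rw [e1, Multiset.count_map, e2]
    congr 1
    exact Multiset.filter_congr (fun x _ => eq_comm)
  rw [h1] at h2
  rw [Multiset.count_add, Multiset.count_eq_of_nodup (Finset.Icc 0 (N-1)).nodup] at h2
  simp only [Finset.mem_val, Finset.mem_Icc] at h2
  rw [← h2]
  by_cases h : c < N
  · rw [if_pos h, if_pos ⟨Nat.zero_le _, by omega⟩]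
  · rw [if_neg h, if_neg (by omega)]

lemma ess_lt {N : ℕ} (hN : 1 ≤ N) {u : ℕ → ℕ} (hu : IsESS (N-1) u) {s : ℕ}
    (hs : s < 2*N) : u s < N := by
  by_contra h
  have h2 := filter_card_ess hN hu (u s)
  rw [if_neg (by omega)] at h2
  have : s ∈ (Finset.range (2*N)).filter (fun t => u t = u s) := by
    simp [Finset.mem_filter, Finset.mem_range, hs]
  rw [Finset.card_eq_zero] at h2
  simp [h2] at this

lemma ess_pair {N : ℕ} (hN : 1 ≤ N) {u : ℕ → ℕ} (hu : IsESS (N-1) u) {c : ℕ} (hc : c < N) :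
    ∃ i j, i < j ∧ j < 2*N ∧ u i = c ∧ u j = c ∧ j - i = c + 1 ∧
      ∀ p, p < 2*N → u p = c → p = i ∨ p = j := by
  have h2 := filter_card_ess hN hu c
  rw [if_pos hc] at h2
  obtain ⟨a, b, hab, hset⟩ := Finset.card_eq_two.mp h2
  have ha : a < 2*N ∧ u a = c := by
    have : a ∈ (Finset.range (2*N)).filter (fun s => u s = c) := by rw [hset]; simp
    simpa [Finset.mem_filter, Finset.mem_range] using this
  have hb : b < 2*N ∧ u b = c := by
    have : b ∈ (Finset.range (2*N)).filter (fun s => u s = c) := by rw [hset]; simp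
    simpa [Finset.mem_filter, Finset.mem_range] using this
  have hall : ∀ p, p < 2*N → u p = c → p = a ∨ p = b := by
    intro p hp hup
    have : p ∈ (Finset.range (2*N)).filter (fun s => u s = c) := by
      simp [Finset.mem_filter, Finset.mem_range, hp, hup]
    rw [hset] at this
    simpa using this
  have hu2 : ∀ i j, i < j → j < 2*N → u i = u j → j - i = u i + 1 := by
    have := hu.2
    have hL : 2 * (N - 1 + 1) = 2 * N := by omega
    rwa [hL] at this
  rcases Nat.lt_or_ge a b with h | h
  · exact ⟨a, b, h, hb.1, ha.2, hb.2, by rw [← ha.2]; exact hu2 a b h hb.1 (ha.2.trans hb.2.symm), hall⟩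
  · have h' : b < a := by omega
    refine ⟨b, a, h', ha.1, hb.2, ha.2, by rw [← hb.2]; exact hu2 b a h' ha.1 (hb.2.trans ha.2.symm), ?_⟩
    intro p hp hup; rcases hall p hp hup with h | h <;> tauto

lemma core {N : ℕ} (hN : 1 ≤ N) {u : ℕ → ℕ} (hu : IsESS (N-1) u) {m : ℕ}
    (hm0 : 0 < m) (hmL : m < 2*N) (hmN : m ≠ N) :
    ((Finset.range (2*N)).filter (fun s => u ((s+m) % (2*N)) = u s)).card = 1 := by
  have hu2 : ∀ i j, i < j → j < 2*N → u i = u j → j - i = u i + 1 := by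
    have := hu.2
    have hL : 2 * (N - 1 + 1) = 2 * N := by omega
    rwa [hL] at this
  rw [Finset.card_eq_one]
  rcases Nat.lt_or_ge m N with hm | hm
  · -- m < N, value c = m - 1
    obtain ⟨i, j, hij, hjL, hui, huj, hgap, hall⟩ := ess_pair hN hu (show m - 1 < N by omega)
    have hji : j = i + m := by omega
    refine ⟨i, ?_⟩
    ext s
    simp only [Finset.mem_filter, Finset.mem_range, Finset.mem_singleton]
    constructor
    · rintro ⟨hs, heq⟩
      rcases Nat.lt_or_ge (s + m) (2*N) with h | h
      · rw [Nat.mod_eq_of_lt h] at heq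
        have hgap2 := hu2 s (s+m) (by omega) h heq.symm
        have hc : u s = m - 1 := by omega
        rcases hall s hs hc with h1 | h1
        · exact h1
        · exfalso
          rcases hall (s+m) h (heq.trans hc) with h2 | h2 <;> omega
      · have hmod : (s + m) % (2*N) = s + m - 2*N := by
          rw [Nat.mod_eq_sub_mod h, Nat.mod_eq_of_lt (by omega)]
        rw [hmod] at heq
        have hlt : s + m - 2*N < s := by omega
        have hgap2 := hu2 (s+m-2*N) s hlt hs heq
        have := ess_lt hN hu (show s + m - 2*N < 2*N by omega)
        omega
    · rintro rfl
      refine ⟨by omega, ?_⟩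
      rw [Nat.mod_eq_of_lt (by omega), ← hji, huj, hui]
  · -- m > N, value c = 2N - m - 1
    have hm' : N < m := by omega
    obtain ⟨i, j, hij, hjL, hui, huj, hgap, hall⟩ := ess_pair hN hu (show 2*N - m - 1 < N by omega)
    have hji : j = i + (2*N - m) := by omega
    refine ⟨j, ?_⟩
    ext s
    simp only [Finset.mem_filter, Finset.mem_range, Finset.mem_singleton]
    constructor
    · rintro ⟨hs, heq⟩
      rcases Nat.lt_or_ge (s + m) (2*N) with h | h
      · rw [Nat.mod_eq_of_lt h] at heq
        have hgap2 := hu2 s (s+m) (by omega) h heq.symm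
        have := ess_lt hN hu hs
        omega
      · have hmod : (s + m) % (2*N) = s + m - 2*N := by
          rw [Nat.mod_eq_sub_mod h, Nat.mod_eq_of_lt (by omega)]
        rw [hmod] at heq
        have hlt : s + m - 2*N < s := by omega
        have hgap2 := hu2 (s+m-2*N) s hlt hs heq
        have hc : u (s+m-2*N) = 2*N - m - 1 := by omega
        rcases hall s hs (heq.symm.trans hc) with h1 | h1
        · exfalso
          rcases hall (s+m-2*N) (by omega) hc with h2 | h2 <;> omega
        · exact h1
    · rintro rfl
      refine ⟨by omega, ?_⟩
      have h2 : (s + m) % (2*N) = i := by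
        rw [Nat.mod_eq_sub_mod (by omega), Nat.mod_eq_of_lt (by omega)]
        omega
      rw [h2, hui, huj]

lemma F_lt {L : ℕ} (hL : 0 < L) (γ : ℤ) (t : ℕ) : ((((t:ℤ) + γ) % (L:ℤ)).toNat) < L := by
  have h0 : (0:ℤ) < (L:ℤ) := by exact_mod_cast hL
  have := Int.emod_lt_of_pos ((t:ℤ) + γ) h0
  have := Int.emod_nonneg ((t:ℤ) + γ) (by omega : (L:ℤ) ≠ 0)
  omega

lemma F_cast {L : ℕ} (hL : 0 < L) (γ : ℤ) (t : ℕ) :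
    (((((t:ℤ) + γ) % (L:ℤ)).toNat : ℤ)) = ((t:ℤ) + γ) % (L:ℤ) := by
  have h0 : (0:ℤ) < (L:ℤ) := by exact_mod_cast hL
  exact Int.toNat_of_nonneg (Int.emod_nonneg _ (by omega))

lemma shift_filter_card {L : ℕ} (hL : 0 < L) (γ : ℤ) (p : ℕ → Prop) [DecidablePred p] :
    ((Finset.range L).filter (fun t : ℕ => p ((((t:ℤ) + γ) % (L:ℤ)).toNat))).card
      = ((Finset.range L).filter p).card := by
  have key : ∀ (δ ε : ℤ) (t : ℕ), t < L →
      ((((((t:ℤ) + δ) % (L:ℤ)).toNat : ℤ) + ε) % (L:ℤ)).toNat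
        = (((t:ℤ) + (δ + ε)) % (L:ℤ)).toNat := by
    intro δ ε t ht
    rw [F_cast hL, Int.emod_add_emod]
    ring_nf
  have key0 : ∀ t : ℕ, t < L → (((t:ℤ) + (γ + -γ)) % (L:ℤ)).toNat = t := by
    intro t ht
    rw [add_neg_cancel, add_zero, Int.emod_eq_of_lt (by positivity) (by exact_mod_cast ht)]
    simp
  apply Finset.card_nbij' (i := fun t : ℕ => (((t:ℤ) + γ) % (L:ℤ)).toNat)
    (j := fun s : ℕ => (((s:ℤ) + -γ) % (L:ℤ)).toNat)
  · intro a ha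
    simp only [Finset.mem_coe, Finset.mem_filter, Finset.mem_range] at ha ⊢
    exact ⟨F_lt hL γ a, ha.2⟩
  · intro a ha
    simp only [Finset.mem_coe, Finset.mem_filter, Finset.mem_range] at ha ⊢
    refine ⟨F_lt hL _ a, ?_⟩
    rw [key (-γ) γ a ha.1, neg_add_cancel, add_zero,
      Int.emod_eq_of_lt (by positivity) (by exact_mod_cast ha.1)]
    simpa using ha.2
  · intro a ha
    simp only [Finset.mem_coe, Finset.mem_filter, Finset.mem_range] at ha ⊢
    rw [key γ (-γ) a ha.1, key0 a ha.1]
  · intro a ha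
    simp only [Finset.mem_coe, Finset.mem_filter, Finset.mem_range] at ha ⊢
    rw [key (-γ) γ a ha.1]
    rw [show -γ + γ = γ + -γ by ring, key0 a ha.1]

/-- If the relative drift is g mod 2N with 0 < |g| < N, there is exactly one
delivery slot. -/
theorem deliverySlots_card_one (N : ℕ) (hN : 1 ≤ N) (u : ℕ → ℕ)
    (hu : IsESS (N - 1) u) (α β g : ℤ)
    (hg : (2 * (N : ℤ)) ∣ (α - β - g)) (hg0 : 0 < |g|) (hgN : |g| < (N : ℤ)) :
    (deliverySlots (2 * N) (shiftZ u (2 * N) α) (shiftZ u (2 * N) β)).card = 1 := by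
  have hL : 0 < 2 * N := by omega
  have hLZ : ((2*N : ℕ) : ℤ) = 2 * (N:ℤ) := by push_cast; ring
  set m : ℕ := ((α - β) % ((2*N : ℕ) : ℤ)).toNat with hm_def
  have hm_cast : (m:ℤ) = (α - β) % ((2*N : ℕ) : ℤ) := by
    rw [hm_def]
    exact Int.toNat_of_nonneg (Int.emod_nonneg _ (by omega))
  -- identify (α - β) % 2N with g % 2N
  have hmodeq : (α - β) % ((2*N:ℕ):ℤ) = g % ((2*N:ℕ):ℤ) := by
    rw [hLZ]
    exact (Int.modEq_iff_dvd.mpr hg).symm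
  have hgne : g ≠ 0 := by simpa using hg0.ne'
  have hgbd : -(N:ℤ) < g ∧ g < (N:ℤ) := abs_lt.mp hgN
  have hgval : g % ((2*N:ℕ):ℤ) = if 0 < g then g else g + 2*(N:ℤ) := by
    rw [hLZ]
    by_cases h : 0 < g
    · rw [if_pos h, Int.emod_eq_of_lt (by omega) (by omega)]
    · rw [if_neg h]
      have : (g + 2*(N:ℤ)) % (2*(N:ℤ)) = g % (2*(N:ℤ)) := by
        simpa using Int.add_mul_emod_self_left (a := g) (b := 2*(N:ℤ)) (c := 1)
      rw [← this, Int.emod_eq_of_lt (by omega) (by omega)]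
  have hm_facts : 0 < m ∧ m < 2*N ∧ m ≠ N := by
    have h1 : (m:ℤ) = g ∨ (m:ℤ) = g + 2*(N:ℤ) := by
      rw [hm_cast, hmodeq, hgval]
      split <;> [left; right] <;> rfl
    constructor
    · rcases h1 with h | h <;> omega
    constructor
    · rcases h1 with h | h <;> omega
    · rcases h1 with h | h <;> omega
  -- transform the delivery-slot predicate
  have hFα : ∀ t : ℕ, ((((t:ℤ) + α) % ((2*N:ℕ):ℤ)).toNat)
      = (((((t:ℤ) + β) % ((2*N:ℕ):ℤ)).toNat + m) % (2*N) : ℕ) := by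
    intro t
    have hcast : ((((((t:ℤ) + β) % ((2*N:ℕ):ℤ)).toNat + m) % (2*N) : ℕ) : ℤ)
        = ((t:ℤ) + α) % ((2*N:ℕ):ℤ) := by
      push_cast
      rw [← hLZ, F_cast hL β t, hm_cast, ← Int.add_emod]
      rw [show (t:ℤ) + β + (α - β) = (t:ℤ) + α by ring]
    have := F_cast hL α t
    omega
  have hpred : ∀ t ∈ Finset.range (2*N),
      (shiftZ u (2*N) α t = shiftZ u (2*N) β t)
        ↔ ((fun s : ℕ => u ((s + m) % (2*N)) = u s) ((((t:ℤ) + β) % ((2*N:ℕ):ℤ)).toNat)) := by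
    intro t _
    simp only [shiftZ, hFα t]
  rw [deliverySlots, Finset.filter_congr hpred,
    shift_filter_card hL β (fun s : ℕ => u ((s + m) % (2*N)) = u s)]
  exact core hN hu hm_facts.1 hm_facts.2.1 hm_facts.2.2
end

section
/- Let u be an ESS of order N−1 with sequence length 2N, and let α, β be integers with α − β ≡ N (mod 2N) (equivalently α − β ≡ −N). Then the set of delivery slots D(shift(u,α), shift(u,β)) has cardinality exactly 2. -/
private theorem deliverySlots_card_two_aux (N : ℕ) (hN : 1 ≤ N) (u : ℕ → ℕ)
    (hu : (↑((List.range (2 * (N - 1 + 1))).map u) : Multiset ℕ) =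
      (Finset.Icc 0 (N-1)).val + (Finset.Icc 0 (N-1)).val ∧
  ∀ i j, i < j → j < 2 * (N - 1 + 1) → u i = u j → j - i = u i + 1) (α β : ℤ)
    (hg : (2 * (N : ℤ)) ∣ (α - β - (N : ℤ))) :
    ((Finset.range (2*N)).filter (fun t : ℕ =>
      u ((((t : ℤ) + α) % ((2*N : ℕ) : ℤ)).toNat) = u ((((t : ℤ) + β) % ((2*N : ℕ) : ℤ)).toNat))).card = 2 := by
  obtain ⟨hperm, hsk⟩ := hu
  have hL : 2 * (N - 1 + 1) = 2 * N := by omega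
  rw [hL] at hperm hsk
  set L : ℕ := 2 * N with hLdef
  have hL0 : ((L:ℕ):ℤ) ≠ 0 := by simp [hLdef]; omega
  have hLpos : (0:ℤ) < ((L:ℕ):ℤ) := by simp [hLdef]; omega
  -- the value N-1 occurs exactly twice
  set T : Finset ℕ := (Finset.range L).filter (fun s => u s = N - 1) with hTdef
  have hTcard : T.card = 2 := by
    have h1 : (((List.range L).map u : List ℕ) : Multiset ℕ).count (N-1) = 2 := by
      rw [hperm, Multiset.count_add]
      have : (Finset.Icc 0 (N-1)).val.count (N-1) = 1 :=
        Multiset.count_eq_one_of_mem (Finset.Icc 0 (N-1)).nodup (by simp)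
      omega
    have h2 : (((List.range L).map u : List ℕ) : Multiset ℕ) = (Finset.range L).val.map u := rfl
    rw [h2, Multiset.count_map] at h1
    have e : Multiset.filter (fun s => u s = N-1) (Finset.range L).val
        = Multiset.filter (fun a => N-1 = u a) (Finset.range L).val :=
      Multiset.filter_congr (fun x _ => eq_comm)
    rw [hTdef, Finset.card_def, Finset.filter_val, e, h1]
  -- extract the two positions of the value N-1
  obtain ⟨a, b, hab, hTab⟩ := Finset.card_eq_two.mp hTcard
  have haT : a ∈ T := by rw [hTab]; simp
  have hbT : b ∈ T := by rw [hTab]; simp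
  rw [hTdef, Finset.mem_filter, Finset.mem_range] at haT hbT
  -- WLOG a < b, and then b = a + N
  wlog hlt : a < b generalizing a b with H
  · exact H b a hab.symm (hTab.trans (Finset.pair_comm a b)) hbT haT (by omega)
  have hba : b - a = N := by
    have := hsk a b hlt hbT.1 (haT.2.trans hbT.2.symm)
    omega
  have hbval : b = a + N := by omega
  have haN : a < N := by omega
  -- characterize the delivery predicate
  have hiff : ∀ s < L, (u s = u ((s + N) % L) ↔ u s = N - 1) := by
    intro s hs
    constructor
    · intro h
      rcases lt_or_ge s N with h1 | h1
      · have hm : (s + N) % L = s + N := Nat.mod_eq_of_lt (by omega)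
        rw [hm] at h
        have := hsk s (s+N) (by omega) (by omega) h
        omega
      · have hm : (s + N) % L = s - N := by
          have h2 : s + N - L = s - N := by omega
          rw [Nat.mod_eq_sub_mod (show s + N ≥ L by omega), h2]
          exact Nat.mod_eq_of_lt (by omega)
        rw [hm] at h
        have := hsk (s - N) s (by omega) (by omega) h.symm
        omega
    · intro h
      have hsT : s ∈ T := by rw [hTdef, Finset.mem_filter, Finset.mem_range]; exact ⟨hs, h⟩
      rw [hTab, Finset.mem_insert, Finset.mem_singleton] at hsT
      rcases hsT with rfl | rfl
      · have hm : (s + N) % L = s + N := Nat.mod_eq_of_lt (by omega)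
        rw [hm, h, ← hbval]
        exact hbT.2.symm
      · have hm : (s + N) % L = a := by
          rw [hbval]
          have : a + N + N = a + 1 * L := by omega
          rw [this, Nat.add_mul_mod_self_right]
          exact Nat.mod_eq_of_lt (by omega)
        rw [hm, h]
        exact haT.2.symm
  -- now a bijection between the delivery slots and T
  have hmodnn : ∀ x : ℤ, 0 ≤ x % (L:ℤ) := fun x => Int.emod_nonneg x hL0
  have hmodlt : ∀ x : ℤ, (x % (L:ℤ)).toNat < L := by
    intro x
    have h1 := Int.emod_lt_of_pos x hLpos
    have h0 := hmodnn x
    omega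
  have hcomp : ∀ x y : ℤ, (((x % (L:ℤ)).toNat : ℤ) + y) % (L:ℤ) = (x + y) % (L:ℤ) := by
    intro x y
    rw [Int.toNat_of_nonneg (hmodnn x), Int.emod_add_emod]
  obtain ⟨k, hk⟩ := hg
  have hkeyA : ∀ t : ℕ, ((((t:ℤ) + α) % (L:ℤ)).toNat) = ((((t:ℤ) + β) % (L:ℤ)).toNat + N) % L := by
    intro t
    set s := (((t:ℤ) + β) % (L:ℤ)).toNat with hsdef
    have hs : (s:ℤ) = ((t:ℤ) + β) % (L:ℤ) := Int.toNat_of_nonneg (hmodnn _)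
    have e1 : ((t:ℤ) + α) % (L:ℤ) = ((s:ℤ) + (N:ℤ)) % (L:ℤ) := by
      rw [hs, Int.emod_add_emod]
      have h2 : (t:ℤ) + α = ((t:ℤ) + β + (N:ℤ)) + ((L:ℤ)) * k := by
        have : ((L:ℕ):ℤ) = 2 * (N:ℤ) := by push_cast [hLdef]; ring
        rw [this]; omega
      rw [h2, Int.add_mul_emod_self_left]
    have e2 : ((s:ℤ) + (N:ℤ)) % (L:ℤ) = (((s + N) % L : ℕ) : ℤ) := by
      push_cast
      ring
    rw [e1, e2, Int.toNat_natCast]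
  have hinj : ∀ t < L, ((((((t:ℤ) + β) % (L:ℤ)).toNat : ℤ) - β) % (L:ℤ)).toNat = t := by
    intro t ht
    rw [sub_eq_add_neg, hcomp]
    have : ((t:ℤ) + β + -β) = (t:ℤ) := by ring
    rw [this, Int.emod_eq_of_lt (by positivity) (by exact_mod_cast ht)]
    exact Int.toNat_natCast t
  have hsurj : ∀ s < L, ((((((s:ℤ) - β) % (L:ℤ)).toNat : ℤ) + β) % (L:ℤ)).toNat = s := by
    intro s hs
    rw [hcomp]
    have : ((s:ℤ) - β + β) = (s:ℤ) := by ring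
    rw [this, Int.emod_eq_of_lt (by positivity) (by exact_mod_cast hs)]
    exact Int.toNat_natCast s
  rw [← hTcard]
  refine Finset.card_nbij' (fun t => (((t:ℤ) + β) % (L:ℤ)).toNat)
      (fun s => (((s:ℤ) - β) % (L:ℤ)).toNat) ?_ ?_ ?_ ?_
  · intro t ht
    rw [Finset.mem_coe, Finset.mem_filter, Finset.mem_range] at ht
    obtain ⟨ht1, ht2⟩ := ht
    rw [hTdef, Finset.mem_coe, Finset.mem_filter, Finset.mem_range]
    refine ⟨hmodlt _, ?_⟩
    rw [hkeyA t] at ht2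
    exact ((hiff _ (hmodlt _)).mp ht2.symm)
  · intro s hsT
    rw [hTdef, Finset.mem_coe, Finset.mem_filter, Finset.mem_range] at hsT
    obtain ⟨hs1, hs2⟩ := hsT
    rw [Finset.mem_coe, Finset.mem_filter, Finset.mem_range]
    refine ⟨hmodlt _, ?_⟩
    rw [hkeyA, hsurj s hs1]
    exact ((hiff s hs1).mpr hs2).symm
  · intro t ht
    rw [Finset.mem_coe, Finset.mem_filter, Finset.mem_range] at ht
    exact hinj t ht.1
  · intro s hsT
    rw [hTdef, Finset.mem_coe, Finset.mem_filter, Finset.mem_range] at hsT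
    exact hsurj s hsT.1

/-- If the relative drift is N mod 2N, there are exactly two delivery slots. -/
theorem deliverySlots_card_two (N : ℕ) (hN : 1 ≤ N) (u : ℕ → ℕ)
    (hu : IsESS (N - 1) u) (α β : ℤ)
    (hg : (2 * (N : ℤ)) ∣ (α - β - (N : ℤ))) :
    (deliverySlots (2 * N) (shiftZ u (2 * N) α) (shiftZ u (2 * N) β)).card = 2 := by
  exact deliverySlots_card_two_aux N hN u hu α β hg
end

section
/- Let u be an ESS of order N−1 of length 2N and let h ∈ [0, N−1] with h ≠ N−1. Suppose u^{i} = u^{j} = h with i < j. Then for the relative rotation g = h+1 (i.e., comparing shift(u, h+1) with u), the unique delivery slot is at position i, while for relative rotation g = −(h+1), the unique delivery slot is at position j; these positions differ. -/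
/-- For a channel h ≠ N−1 occurring at positions i < j in an ESS u, the unique
delivery slot for relative rotation h+1 is i, and for rotation −(h+1) it is j;
these positions differ. -/
theorem calibration_case3 (N : ℕ) (hN : 1 ≤ N) (u : ℕ → ℕ)
    (hu : IsESS (N - 1) u) (h : ℕ) (hhN : h < N) (hne : h ≠ N - 1)
    (i j : ℕ) (hij : i < j) (hj : j < 2 * N) (hi' : u i = h) (hj' : u j = h) :
    deliverySlots (2 * N) (shiftZ u (2 * N) ((h : ℤ) + 1)) u = {i} ∧
    deliverySlots (2 * N) (shiftZ u (2 * N) (-((h : ℤ) + 1))) u = {j} ∧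
    i ≠ j := by
  obtain ⟨hperm, hskolem⟩ := hu
  have hN2 : N - 1 + 1 = N := Nat.succ_pred_eq_of_pos hN
  rw [hN2] at hperm hskolem
  -- all values are ≤ N - 1
  have hval : ∀ t, t < 2 * N → u t ≤ N - 1 := by
    intro t ht
    have hmem : u t ∈ (↑((List.range (2 * N)).map u) : Multiset ℕ) := by
      simp only [Multiset.mem_coe, List.mem_map]
      exact ⟨t, List.mem_range.mpr ht, rfl⟩
    rw [hperm] at hmem
    rcases Multiset.mem_add.mp hmem with hm | hm <;>
      exact (Finset.mem_Icc.mp hm).2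
  have hgap : j = i + (h + 1) := by
    have := hskolem i j hij hj (hi'.trans hj'.symm)
    rw [hi'] at this; omega
  -- the only positions with value h are i and j
  have huniq : ∀ t, t < 2 * N → u t = h → t = i ∨ t = j := by
    intro t ht hth
    by_contra hc
    push_neg at hc
    obtain ⟨hti, htj⟩ := hc
    rcases Nat.lt_trichotomy t i with h1 | h1 | h1
    · have e1 := hskolem t i h1 (by omega) (hth.trans hi'.symm)
      have e2 := hskolem t j (by omega) hj (hth.trans hj'.symm)
      rw [hth] at e1 e2; omega
    · exact hti h1
    · rcases Nat.lt_trichotomy t j with h2 | h2 | h2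
      · have e1 := hskolem i t h1 (by omega) (hi'.trans hth.symm)
        rw [hi'] at e1; omega
      · exact htj h2
      · have e1 := hskolem i t (by omega) ht (hi'.trans hth.symm)
        have e2 := hskolem j t h2 ht (hj'.trans hth.symm)
        rw [hi'] at e1; rw [hj'] at e2; omega
  have hmodaux : ∀ x, 2 * N ≤ x → x - 2 * N < 2 * N → x % (2 * N) = x - 2 * N := by
    intro x h1 h2
    rw [Nat.mod_eq_sub_mod h1, Nat.mod_eq_of_lt h2]
  have hcast1 : ∀ t : ℕ, ((((t : ℤ) + ((h : ℤ) + 1)) % ((2 * N : ℕ) : ℤ)).toNat)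
      = (t + h + 1) % (2 * N) := by
    intro t
    rw [show ((t : ℤ) + ((h : ℤ) + 1)) = ((t + h + 1 : ℕ) : ℤ) from by push_cast; ring,
      ← Int.natCast_mod, Int.toNat_natCast]
  have hcast2 : ∀ t : ℕ, t < 2 * N →
      ((((t : ℤ) + (-((h : ℤ) + 1))) % ((2 * N : ℕ) : ℤ)).toNat)
      = (t + 2 * N - (h + 1)) % (2 * N) := by
    intro t ht
    rw [show ((t : ℤ) + (-((h : ℤ) + 1)))
        = ((t + 2 * N - (h + 1) : ℕ) : ℤ) + -(((2 * N : ℕ) : ℤ)) from by omega]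
    rw [Int.add_neg_emod_self, ← Int.natCast_mod, Int.toNat_natCast]
  refine ⟨?_, ?_, by omega⟩
  · ext t
    simp only [deliverySlots, shiftZ, Finset.mem_filter, Finset.mem_range,
      Finset.mem_singleton, hcast1]
    constructor
    · rintro ⟨ht, heq⟩
      by_cases hc : t + h + 1 < 2 * N
      · rw [Nat.mod_eq_of_lt hc] at heq
        have e1 := hskolem t (t + h + 1) (by omega) hc heq.symm
        have hth : u t = h := by omega
        rcases huniq t ht hth with h1 | h1
        · exact h1
        · exfalso
          subst h1
          have hth2 : u (t + h + 1) = h := by rw [heq, hth]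
          rcases huniq (t + h + 1) hc hth2 with h2 | h2 <;> omega
      · rw [hmodaux (t + h + 1) (by omega) (by omega)] at heq
        have hs : t + h + 1 - 2 * N < t := by omega
        have e1 := hskolem _ t hs ht heq
        have hb := hval _ (show t + h + 1 - 2 * N < 2 * N by omega)
        omega
    · intro heq
      rw [heq]
      refine ⟨by omega, ?_⟩
      rw [show i + h + 1 = j from by omega, Nat.mod_eq_of_lt hj, hj', hi']
  · ext t
    rw [deliverySlots, Finset.mem_filter]
    simp only [deliverySlots, shiftZ, Finset.mem_filter, Finset.mem_range,
      Finset.mem_singleton]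
    constructor
    · rintro ⟨ht, heq⟩
      rw [hcast2 t ht] at heq
      by_cases hc : h + 1 ≤ t
      · have hmod : (t + 2 * N - (h + 1)) % (2 * N) = t - (h + 1) := by
          rw [hmodaux _ (by omega) (by omega)]; omega
        rw [hmod] at heq
        have e1 := hskolem (t - (h + 1)) t (by omega) ht heq
        have hsh : u (t - (h + 1)) = h := by omega
        have hth : u t = h := by rw [← heq, hsh]
        rcases huniq t ht hth with h1 | h1
        · exfalso
          subst h1
          rcases huniq (t - (h + 1)) (by omega) hsh with h2 | h2 <;> omega
        · exact h1
      · rw [Nat.mod_eq_of_lt (by omega)] at heq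
        have e1 := hskolem t (t + 2 * N - (h + 1)) (by omega) (by omega) heq.symm
        have hb := hval t ht
        omega
    · intro heq
      rw [heq]
      refine ⟨hj, ?_⟩
      rw [hcast2 j hj]
      have hmod : (j + 2 * N - (h + 1)) % (2 * N) = i := by
        rw [hmodaux _ (by omega) (by omega)]; omega
      rw [hmod, hi', hj']
end
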